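/- Assume (F0)-(F5). Then for every t ∈ [0,T] and every u₁, u₂, u₃ ∈ X, the energy-dissipation cost satisfies the triangle inequality: c_t(u₁, u₂) ≤ c_t(u₁, u₃) + c_t(u₃, u₂). -/

import Mathlib

/-!
The cost is the infimum of the energies of admissible curves. A curve from `u₁` to `u₃` on
`[-N₁, N₁]` and one from `u₃` to `u₂` on `[-N₂, N₂]` agree, with vanishing velocity, at `u₃`;
translated to `[-(N₁ + N₂), N₁ - N₂]` and `[N₁ - N₂, N₁ + N₂]` they concatenate to an admissible
curve from `u₁` to `u₂` on `[-(N₁ + N₂), N₁ + N₂]` whose energy is the sum of the two energies.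
Since `B` and `B⁻¹` are positive, all energies are nonnegative, and taking infima gives the
inequality.
-/

open Set Filter Topology MeasureTheory
open scoped RealInnerProductSpace

noncomputable def cost {X : Type*} [NormedAddCommGroup X] [InnerProductSpace ℝ X]
    (A B Binv : X →L[ℝ] X) (gradF : ℝ → X → X) (t : ℝ) (u₁ u₂ : X) : ℝ :=
  sInf { c : ℝ | ∃ (N : ℕ) (v v' v'' : ℝ → X),
    -- v is C¹ on [-N,N] with derivative v'
    (∀ s ∈ Set.Icc (-(N : ℝ)) (N : ℝ),
      HasDerivWithinAt v (v' s) (Set.Icc (-(N : ℝ)) (N : ℝ)) s) ∧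
    ContinuousOn v' (Set.Icc (-(N : ℝ)) (N : ℝ)) ∧
    -- v' is absolutely continuous with (second) derivative v'' in L²
    MeasureTheory.IntegrableOn v'' (Set.Icc (-(N : ℝ)) (N : ℝ)) ∧
    MeasureTheory.IntegrableOn (fun s => ‖v'' s‖ ^ 2) (Set.Icc (-(N : ℝ)) (N : ℝ)) ∧
    (∀ s ∈ Set.Icc (-(N : ℝ)) (N : ℝ), v' s = v' (-(N : ℝ)) + ∫ r in (-(N : ℝ))..s, v'' r) ∧
    -- boundary conditions
    v (-(N : ℝ)) = u₁ ∧ v (N : ℝ) = u₂ ∧ v' (-(N : ℝ)) = 0 ∧ v' (N : ℝ) = 0 ∧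
    -- value of the functional
    c = (1 / 2) * ∫ s in (-(N : ℝ))..(N : ℝ),
      (⟪gradF t (v s) + A (v'' s), Binv (gradF t (v s) + A (v'' s))⟫
        + ⟪v' s, B (v' s)⟫) }

section General

variable {E : Type*} [NormedAddCommGroup E]

lemma ContinuousOn.memLp_Icc {f : ℝ → E} {a b : ℝ} (hf : ContinuousOn f (Icc a b))
    (p : ENNReal) : MemLp f p (volume.restrict (Icc a b)) := by
  obtain ⟨C, hC⟩ := isCompact_Icc.exists_bound_of_continuousOn hf
  exact .of_bound (hf.aestronglyMeasurable measurableSet_Icc) C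
    (ae_restrict_of_forall_mem measurableSet_Icc hC)

lemma MeasureTheory.MemLp.integrable_inner_apply {α F : Type*} [MeasurableSpace α] {μ : Measure α}
    [NormedAddCommGroup F] [InnerProductSpace ℝ F] {f : α → F} (hf : MemLp f 2 μ)
    (T : F →L[ℝ] F) : Integrable (fun x => ⟪f x, T (f x)⟫) μ := by
  refine (((memLp_two_iff_integrable_sq_norm hf.1).1 hf).const_mul ‖T‖).mono'
    (hf.1.inner (T.continuous.comp_aestronglyMeasurable hf.1)) (ae_of_all _ fun x => ?_)
  calc ‖⟪f x, T (f x)⟫‖ ≤ ‖f x‖ * ‖T (f x)‖ := norm_inner_le_norm _ _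
    _ ≤ ‖f x‖ * (‖T‖ * ‖f x‖) := by gcongr; exact T.le_opNorm _
    _ = ‖T‖ * ‖f x‖ ^ 2 := by ring

lemma hasDerivWithinAt_Icc_of_eqOn [NormedSpace ℝ E] {f g f' g' : ℝ → E} {a b : ℝ}
    (hg : ∀ s ∈ Icc a b, HasDerivWithinAt g (g' s) (Icc a b) s)
    (hfg : EqOn f g (Icc a b)) (hfg' : EqOn f' g' (Icc a b)) (x : ℝ) :
    HasDerivWithinAt f (f' x) (Icc a b) x := by
  by_cases hx : x ∈ Icc a b
  · rw [hfg' hx]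
    exact (hg x hx).congr hfg (hfg hx)
  · exact HasFDerivWithinAt.of_notMem_closure (by rwa [closure_Icc])

lemma integrableOn_Icc_of_eqOn_Icc_Ioc {F f g : ℝ → E} {a m b : ℝ} (ham : a ≤ m) (hmb : m ≤ b)
    (hf : IntegrableOn f (Icc a m)) (hg : IntegrableOn g (Icc m b))
    (hFf : EqOn F f (Icc a m)) (hFg : EqOn F g (Ioc m b)) : IntegrableOn F (Icc a b) := by
  rw [← Icc_union_Icc_eq_Icc ham hmb]
  refine (hf.congr_fun hFf.symm measurableSet_Icc).union ?_
  rw [integrableOn_Icc_iff_integrableOn_Ioc]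
  exact (hg.mono_set Ioc_subset_Icc_self).congr_fun hFg.symm measurableSet_Ioc

lemma MeasureTheory.IntegrableOn.intervalIntegrable_of_mem_Icc {f : ℝ → E} {a b c d : ℝ}
    (hf : IntegrableOn f (Icc a b)) (hc : c ∈ Icc a b) (hd : d ∈ Icc a b) :
    IntervalIntegrable f volume c d :=
  (hf.mono_set (uIcc_subset_Icc hc hd)).intervalIntegrable

lemma MeasureTheory.IntegrableOn.comp_add_right_Icc {f : ℝ → E} {a b c : ℝ}
    (hf : IntegrableOn f (Icc (a + c) (b + c))) : IntegrableOn (fun s => f (s + c)) (Icc a b) :=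
  ((measurePreserving_add_right volume c).integrableOn_image (measurableEmbedding_addRight c)).1
    (by rwa [image_add_const_Icc])

lemma eq_add_integral_congr [NormedSpace ℝ E] {f g f'' g'' : ℝ → E} {a b : ℝ}
    (hg : ∀ s ∈ Icc a b, g s = g a + ∫ r in a..s, g'' r)
    (hfg : EqOn f g (Icc a b)) (hfg'' : EqOn f'' g'' (Ioc a b)) :
    ∀ s ∈ Icc a b, f s = f a + ∫ r in a..s, f'' r := by
  intro s hs
  rw [hfg hs, hfg ⟨le_rfl, hs.1.trans hs.2⟩, hg s hs]
  refine congrArg (g a + ·) (intervalIntegral.integral_congr_ae (ae_of_all _ fun r hr => ?_))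
  rw [uIoc_of_le hs.1] at hr
  exact (hfg'' ⟨hr.1, hr.2.trans hs.2⟩).symm

lemma eq_add_integral_of_Icc_union [NormedSpace ℝ E] {f f'' : ℝ → E} {a m b : ℝ}
    (hm : m ∈ Icc a b) (hf'' : IntegrableOn f'' (Icc a b))
    (hleft : ∀ s ∈ Icc a m, f s = f a + ∫ r in a..s, f'' r)
    (hright : ∀ s ∈ Icc m b, f s = f m + ∫ r in m..s, f'' r) :
    ∀ s ∈ Icc a b, f s = f a + ∫ r in a..s, f'' r := by
  intro s hs
  rcases le_or_gt s m with hsm | hms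
  · exact hleft s ⟨hs.1, hsm⟩
  · rw [hright s ⟨hms.le, hs.2⟩, hleft m ⟨hm.1, le_rfl⟩, add_assoc,
      intervalIntegral.integral_add_adjacent_intervals
        (hf''.intervalIntegrable_of_mem_Icc ⟨le_rfl, hm.1.trans hm.2⟩ hm)
        (hf''.intervalIntegrable_of_mem_Icc hm hs)]

end General

namespace Set

variable {α β : Type*} [LinearOrder α] {f g : α → β} {a m b : α}

lemma piecewise_Iic_eqOn_Icc_left : EqOn ((Iic m).piecewise f g) f (Icc a m) :=
  (piecewise_eqOn _ _ _).mono Icc_subset_Iic_self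

lemma piecewise_Iic_eqOn_Ioc_right : EqOn ((Iic m).piecewise f g) g (Ioc m b) :=
  (piecewise_eqOn_compl _ _ _).mono fun _ hx => not_le.2 hx.1

lemma piecewise_Iic_eqOn_Icc_right (h : f m = g m) :
    EqOn ((Iic m).piecewise f g) g (Icc m b) := by
  intro x hx
  rcases hx.1.eq_or_lt with rfl | hlt
  · simpa using h
  · exact piecewise_Iic_eqOn_Ioc_right ⟨hlt, hx.2⟩

end Set

section

variable {X : Type*} [NormedAddCommGroup X] [InnerProductSpace ℝ X]

/-- The class `V^{t,N}_{u₁,u₂}` of the paper on an arbitrary interval `[a, b]`, with the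
derivatives `v'` and `v''` carried as data, as in `cost`. -/
structure IsAdmissiblePath (v v' v'' : ℝ → X) (a b : ℝ) (u₁ u₂ : X) : Prop where
  hasDerivWithinAt : ∀ s ∈ Icc a b, HasDerivWithinAt v (v' s) (Icc a b) s
  continuousOn_deriv : ContinuousOn v' (Icc a b)
  integrableOn_deriv2 : IntegrableOn v'' (Icc a b)
  integrableOn_sq_norm_deriv2 : IntegrableOn (fun s => ‖v'' s‖ ^ 2) (Icc a b)
  deriv_eq_add_integral : ∀ s ∈ Icc a b, v' s = v' a + ∫ r in a..s, v'' r
  left_eq : v a = u₁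
  right_eq : v b = u₂
  deriv_left_eq_zero : v' a = 0
  deriv_right_eq_zero : v' b = 0

namespace IsAdmissiblePath

variable {v v' v'' p p' p'' q q' q'' : ℝ → X} {a b m c : ℝ} {u₁ u₂ u₃ : X}

lemma continuousOn (h : IsAdmissiblePath v v' v'' a b u₁ u₂) : ContinuousOn v (Icc a b) :=
  fun s hs => (h.hasDerivWithinAt s hs).continuousWithinAt

lemma of_hasDerivAt [CompleteSpace X] (hv : ∀ s, HasDerivAt v (v' s) s)
    (hv' : ∀ s, HasDerivAt v' (v'' s) s) (hv'' : Continuous v'')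
    (ha : v a = u₁) (hb : v b = u₂) (ha' : v' a = 0) (hb' : v' b = 0) :
    IsAdmissiblePath v v' v'' a b u₁ u₂ where
  hasDerivWithinAt s _ := (hv s).hasDerivWithinAt
  continuousOn_deriv := (continuous_iff_continuousAt.2 fun s => (hv' s).continuousAt).continuousOn
  integrableOn_deriv2 := hv''.integrableOn_Icc
  integrableOn_sq_norm_deriv2 := (hv''.norm.pow 2).integrableOn_Icc
  deriv_eq_add_integral s _ := by
    rw [intervalIntegral.integral_eq_sub_of_hasDerivAt (fun r _ => hv' r)
      (hv''.intervalIntegrable _ _), add_sub_cancel]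
  left_eq := ha
  right_eq := hb
  deriv_left_eq_zero := ha'
  deriv_right_eq_zero := hb'

lemma comp_add_const (h : IsAdmissiblePath v v' v'' a b u₁ u₂) {a' b' : ℝ}
    (ha : a' + c = a) (hb : b' + c = b) :
    IsAdmissiblePath (fun s => v (s + c)) (fun s => v' (s + c)) (fun s => v'' (s + c))
      a' b' u₁ u₂ := by
  subst ha hb
  have hmaps : MapsTo (· + c) (Icc a' b') (Icc (a' + c) (b' + c)) :=
    fun s hs => ⟨by linarith [hs.1], by linarith [hs.2]⟩
  refine ⟨fun s hs => ?_, h.continuousOn_deriv.comp (by fun_prop) hmaps,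
    h.integrableOn_deriv2.comp_add_right_Icc, h.integrableOn_sq_norm_deriv2.comp_add_right_Icc,
    fun s hs => ?_, h.left_eq, h.right_eq, h.deriv_left_eq_zero, h.deriv_right_eq_zero⟩
  · simpa [Function.comp_def] using
      (h.hasDerivWithinAt _ (hmaps hs)).scomp s ((hasDerivWithinAt_id s _).add_const c) hmaps
  · rw [intervalIntegral.integral_comp_add_right (fun r => v'' r)]
    exact h.deriv_eq_add_integral _ (hmaps hs)

lemma piecewise (hp : IsAdmissiblePath p p' p'' a m u₁ u₃)
    (hq : IsAdmissiblePath q q' q'' m b u₃ u₂) (ham : a ≤ m) (hmb : m ≤ b) :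
    IsAdmissiblePath ((Iic m).piecewise p q) ((Iic m).piecewise p' q')
      ((Iic m).piecewise p'' q'') a b u₁ u₂ := by
  have hVp : EqOn ((Iic m).piecewise p q) p (Icc a m) := piecewise_Iic_eqOn_Icc_left
  have hV'p : EqOn ((Iic m).piecewise p' q') p' (Icc a m) := piecewise_Iic_eqOn_Icc_left
  have hV''p : EqOn ((Iic m).piecewise p'' q'') p'' (Icc a m) := piecewise_Iic_eqOn_Icc_left
  have hVq : EqOn ((Iic m).piecewise p q) q (Icc m b) :=
    piecewise_Iic_eqOn_Icc_right (hp.right_eq.trans hq.left_eq.symm)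
  have hV'q : EqOn ((Iic m).piecewise p' q') q' (Icc m b) :=
    piecewise_Iic_eqOn_Icc_right (hp.deriv_right_eq_zero.trans hq.deriv_left_eq_zero.symm)
  have hV''q : EqOn ((Iic m).piecewise p'' q'') q'' (Ioc m b) := piecewise_Iic_eqOn_Ioc_right
  have hV''int : IntegrableOn ((Iic m).piecewise p'' q'') (Icc a b) :=
    integrableOn_Icc_of_eqOn_Icc_Ioc ham hmb hp.integrableOn_deriv2 hq.integrableOn_deriv2
      hV''p hV''q
  refine ⟨fun s _ => ?_, ?_, hV''int, ?_, ?_, ?_, ?_, ?_, ?_⟩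
  · rw [← Icc_union_Icc_eq_Icc ham hmb]
    exact (hasDerivWithinAt_Icc_of_eqOn hp.hasDerivWithinAt hVp hV'p s).union
      (hasDerivWithinAt_Icc_of_eqOn hq.hasDerivWithinAt hVq hV'q s)
  · rw [← Icc_union_Icc_eq_Icc ham hmb]
    exact (hp.continuousOn_deriv.congr hV'p).union_of_isClosed
      (hq.continuousOn_deriv.congr hV'q) isClosed_Icc isClosed_Icc
  · exact integrableOn_Icc_of_eqOn_Icc_Ioc ham hmb hp.integrableOn_sq_norm_deriv2
      hq.integrableOn_sq_norm_deriv2 (fun s hs => by rw [hV''p hs]) (fun s hs => by rw [hV''q hs])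
  · exact eq_add_integral_of_Icc_union ⟨ham, hmb⟩ hV''int
      (eq_add_integral_congr hp.deriv_eq_add_integral hV'p (hV''p.mono Ioc_subset_Icc_self))
      (eq_add_integral_congr hq.deriv_eq_add_integral hV'q hV''q)
  · rw [hVp ⟨le_rfl, ham⟩, hp.left_eq]
  · rw [hVq ⟨hmb, le_rfl⟩, hq.right_eq]
  · rw [hV'p ⟨le_rfl, ham⟩, hp.deriv_left_eq_zero]
  · rw [hV'q ⟨hmb, le_rfl⟩, hq.deriv_right_eq_zero]

end IsAdmissiblePath

section Energy

variable (A B Binv : X →L[ℝ] X) (g : X → X)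

def energyDensity (v v' v'' : ℝ → X) (s : ℝ) : ℝ :=
  ⟪g (v s) + A (v'' s), Binv (g (v s) + A (v'' s))⟫ + ⟪v' s, B (v' s)⟫

variable {A B Binv g} {v v' v'' p p' p'' q q' q'' : ℝ → X} {a b m c : ℝ} {u₁ u₂ u₃ : X}

lemma energyDensity_nonneg (hBpos : ∀ x : X, x ≠ 0 → 0 < ⟪x, B x⟫)
    (hBinv : ∀ x : X, B (Binv x) = x) (s : ℝ) : 0 ≤ energyDensity A B Binv g v v' v'' s := by
  have hB : ∀ x : X, 0 ≤ ⟪x, B x⟫ := fun x => by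
    rcases eq_or_ne x 0 with rfl | hx
    · simp
    · exact (hBpos x hx).le
  have hBinv_nonneg : ∀ x : X, 0 ≤ ⟪x, Binv x⟫ := fun x => by
    simpa only [hBinv, real_inner_comm] using hB (Binv x)
  exact add_nonneg (hBinv_nonneg _) (hB _)

lemma IsAdmissiblePath.integrableOn_energyDensity (hg : Continuous g)
    (h : IsAdmissiblePath v v' v'' a b u₁ u₂) :
    IntegrableOn (energyDensity A B Binv g v v' v'') (Icc a b) := by
  have hv'' : MemLp v'' 2 (volume.restrict (Icc a b)) :=
    (memLp_two_iff_integrable_sq_norm h.integrableOn_deriv2.1).2 h.integrableOn_sq_norm_deriv2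
  have hw : MemLp (fun s => g (v s) + A (v'' s)) 2 (volume.restrict (Icc a b)) :=
    ((hg.comp_continuousOn h.continuousOn).memLp_Icc 2).add (A.comp_memLp' hv'')
  exact (hw.integrable_inner_apply Binv).add
    ((h.continuousOn_deriv.memLp_Icc 2).integrable_inner_apply B)

lemma integral_energyDensity_comp_add_const (a' b' : ℝ) :
    ∫ s in a'..b', energyDensity A B Binv g (fun s => v (s + c)) (fun s => v' (s + c))
      (fun s => v'' (s + c)) s = ∫ s in (a' + c)..(b' + c), energyDensity A B Binv g v v' v'' s :=
  intervalIntegral.integral_comp_add_right (energyDensity A B Binv g v v' v'') c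

lemma integral_energyDensity_piecewise (hg : Continuous g)
    (hp : IsAdmissiblePath p p' p'' a m u₁ u₃) (hq : IsAdmissiblePath q q' q'' m b u₃ u₂)
    (ham : a ≤ m) (hmb : m ≤ b) :
    ∫ s in a..b, energyDensity A B Binv g ((Iic m).piecewise p q) ((Iic m).piecewise p' q')
      ((Iic m).piecewise p'' q'') s =
    (∫ s in a..m, energyDensity A B Binv g p p' p'' s) +
      ∫ s in m..b, energyDensity A B Binv g q q' q'' s := by
  have hE : IntegrableOn (energyDensity A B Binv g _ _ _) (Icc a b) :=
    (hp.piecewise hq ham hmb).integrableOn_energyDensity hg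
  have hm : m ∈ Icc a b := ⟨ham, hmb⟩
  rw [← intervalIntegral.integral_add_adjacent_intervals
    (hE.intervalIntegrable_of_mem_Icc ⟨le_rfl, ham.trans hmb⟩ hm)
    (hE.intervalIntegrable_of_mem_Icc hm ⟨ham.trans hmb, le_rfl⟩)]
  congr 1
  · refine intervalIntegral.integral_congr fun s hs => ?_
    rw [uIcc_of_le ham] at hs
    simp only [energyDensity, piecewise_Iic_eqOn_Icc_left hs]
  · refine intervalIntegral.integral_congr_ae (ae_of_all _ fun s hs => ?_)
    rw [uIoc_of_le hmb] at hs
    simp only [energyDensity, piecewise_Iic_eqOn_Ioc_right hs]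

end Energy

lemma exists_isAdmissiblePath [CompleteSpace X] (u₁ u₂ : X) :
    ∃ v v' v'' : ℝ → X, IsAdmissiblePath v v' v'' (-1) 1 u₁ u₂ := by
  -- `h s = (2 + 3 s - s ^ 3) / 4` is the cubic with `h (-1) = 0`, `h 1 = 1`, `h' (±1) = 0`
  refine ⟨fun s => u₁ + ((2 + 3 * s - s ^ 3) / 4) • (u₂ - u₁),
    fun s => ((3 - 3 * s ^ 2) / 4) • (u₂ - u₁), fun s => (-(3 / 2) * s) • (u₂ - u₁),
    .of_hasDerivAt (fun s => ?_) (fun s => ?_) (by fun_prop) ?_ ?_ ?_ ?_⟩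
  · have := ((((hasDerivAt_id s).const_mul 3).const_add 2).sub (hasDerivAt_pow 3 s)).div_const 4
    convert (this.smul_const (u₂ - u₁)).const_add u₁ using 2 <;> norm_num
  · have := (((hasDerivAt_pow 2 s).const_mul 3).const_sub 3).div_const 4
    convert this.smul_const (u₂ - u₁) using 2
    push_cast
    ring
  all_goals norm_num

section Cost

variable (A B Binv : X →L[ℝ] X) (g : X → X)

def costValues (u₁ u₂ : X) : Set ℝ :=
  {c | ∃ (N : ℕ) (v v' v'' : ℝ → X), IsAdmissiblePath v v' v'' (-N) N u₁ u₂ ∧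
    c = (1 / 2) * ∫ s in (-(N : ℝ))..N, energyDensity A B Binv g v v' v'' s}

lemma cost_eq_sInf_costValues (gradF : ℝ → X → X) (t : ℝ) (u₁ u₂ : X) :
    cost A B Binv gradF t u₁ u₂ = sInf (costValues A B Binv (gradF t) u₁ u₂) := by
  unfold cost
  congr 1
  ext c
  constructor
  · rintro ⟨N, v, v', v'', h₁, h₂, h₃, h₄, h₅, h₆, h₇, h₈, h₉, hc⟩
    exact ⟨N, v, v', v'', ⟨h₁, h₂, h₃, h₄, h₅, h₆, h₇, h₈, h₉⟩, hc⟩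
  · rintro ⟨N, v, v', v'', ⟨h₁, h₂, h₃, h₄, h₅, h₆, h₇, h₈, h₉⟩, hc⟩
    exact ⟨N, v, v', v'', h₁, h₂, h₃, h₄, h₅, h₆, h₇, h₈, h₉, hc⟩

variable {A B Binv g}

lemma costValues_nonempty [CompleteSpace X] (u₁ u₂ : X) :
    (costValues A B Binv g u₁ u₂).Nonempty := by
  obtain ⟨v, v', v'', hv⟩ := exists_isAdmissiblePath u₁ u₂
  exact ⟨_, 1, v, v', v'', by simpa using hv, rfl⟩

lemma costValues_bddBelow (hBpos : ∀ x : X, x ≠ 0 → 0 < ⟪x, B x⟫)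
    (hBinv : ∀ x : X, B (Binv x) = x) (u₁ u₂ : X) : BddBelow (costValues A B Binv g u₁ u₂) := by
  refine ⟨0, ?_⟩
  rintro _ ⟨N, v, v', v'', -, rfl⟩
  have hN : -(N : ℝ) ≤ N := by linarith [N.cast_nonneg (α := ℝ)]
  exact mul_nonneg (by norm_num) (intervalIntegral.integral_nonneg hN fun s _ =>
    energyDensity_nonneg hBpos hBinv s)

lemma add_mem_costValues (hg : Continuous g) {u₁ u₂ u₃ : X} {c₁ c₂ : ℝ}
    (h₁ : c₁ ∈ costValues A B Binv g u₁ u₃) (h₂ : c₂ ∈ costValues A B Binv g u₃ u₂) :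
    c₁ + c₂ ∈ costValues A B Binv g u₁ u₂ := by
  obtain ⟨N₁, p, p', p'', hp, rfl⟩ := h₁
  obtain ⟨N₂, q, q', q'', hq, rfl⟩ := h₂
  have hp' : IsAdmissiblePath (fun s => p (s + N₂)) (fun s => p' (s + N₂))
      (fun s => p'' (s + N₂)) (-(N₁ + N₂)) (N₁ - N₂) u₁ u₃ :=
    hp.comp_add_const (by ring) (by ring)
  have hq' : IsAdmissiblePath (fun s => q (s + -N₁)) (fun s => q' (s + -N₁))
      (fun s => q'' (s + -N₁)) (N₁ - N₂) (N₁ + N₂) u₃ u₂ :=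
    hq.comp_add_const (by ring) (by ring)
  have ham : -((N₁ : ℝ) + N₂) ≤ N₁ - N₂ := by linarith [N₁.cast_nonneg (α := ℝ)]
  have hmb : (N₁ : ℝ) - N₂ ≤ N₁ + N₂ := by linarith [N₂.cast_nonneg (α := ℝ)]
  refine ⟨N₁ + N₂, _, _, _, by push_cast; exact hp'.piecewise hq' ham hmb, ?_⟩
  push_cast
  rw [integral_energyDensity_piecewise hg hp' hq' ham hmb, integral_energyDensity_comp_add_const,
    integral_energyDensity_comp_add_const]
  ring_nf

end Cost

end

theorem cost_triangle_general
    {X : Type*} [NormedAddCommGroup X] [InnerProductSpace ℝ X] [FiniteDimensional ℝ X]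
    (A B Binv : X →L[ℝ] X)
    (hBpos : ∀ x : X, x ≠ 0 → 0 < ⟪x, B x⟫)
    -- Binv is the inverse of B
    (hBinv₂ : ∀ x : X, B (Binv x) = x)
    (T : ℝ)
    (gradF : ℝ → X → X)
    -- (F4)
    (hessF : ℝ → X → X →L[ℝ] X)
    (hhessF : ∀ t ∈ Set.Icc 0 T, ∀ x : X, HasFDerivAt (gradF t) (hessF t x) x)
    (t : ℝ) (ht : t ∈ Set.Icc 0 T) (u₁ u₂ u₃ : X) :
    cost A B Binv gradF t u₁ u₂ ≤ cost A B Binv gradF t u₁ u₃ + cost A B Binv gradF t u₃ u₂ := by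
  have hg : Continuous (gradF t) :=
    continuous_iff_continuousAt.2 fun x => (hhessF t ht x).continuousAt
  have hne : ∀ u u', (costValues A B Binv (gradF t) u u').Nonempty := costValues_nonempty
  have hbdd : ∀ u u', BddBelow (costValues A B Binv (gradF t) u u') :=
    costValues_bddBelow hBpos hBinv₂
  simp only [cost_eq_sInf_costValues]
  rw [← csInf_add (hne u₁ u₃) (hbdd u₁ u₃) (hne u₃ u₂) (hbdd u₃ u₂)]
  exact csInf_le_csInf (hbdd u₁ u₂) ((hne u₁ u₃).add (hne u₃ u₂))
    (Set.add_subset_iff.2 fun _ h₁ _ h₂ => add_mem_costValues hg h₁ h₂)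

theorem cost_triangle
    {X : Type*} [NormedAddCommGroup X] [InnerProductSpace ℝ X] [FiniteDimensional ℝ X]
    (A B Binv : X →L[ℝ] X)
    (hAsymm : ∀ x y : X, ⟪A x, y⟫ = ⟪x, A y⟫)
    (hApos : ∀ x : X, x ≠ 0 → 0 < ⟪x, A x⟫)
    (hBsymm : ∀ x y : X, ⟪B x, y⟫ = ⟪x, B y⟫)
    (hBpos : ∀ x : X, x ≠ 0 → 0 < ⟪x, B x⟫)
    -- Binv is the inverse of B
    (hBinv₁ : ∀ x : X, Binv (B x) = x) (hBinv₂ : ∀ x : X, B (Binv x) = x)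
    (T : ℝ) (hT : 0 < T)
    (F dtF : ℝ → X → ℝ) (gradF : ℝ → X → X)
    -- (F0)
    (hF0 : ContDiffOn ℝ 1 (fun p : ℝ × X => F p.1 p.2) (Set.Icc 0 T ×ˢ Set.univ))
    (hgradF : ∀ t ∈ Set.Icc 0 T, ∀ x : X, HasGradientAt (F t) (gradF t x) x)
    (hdtF : ∀ x : X, ∀ t ∈ Set.Icc 0 T,
      HasDerivWithinAt (fun τ => F τ x) (dtF t x) (Set.Icc 0 T) t)
    -- (F1)
    (hF1 : ∀ ρ > (0 : ℝ), Bornology.IsBounded {x : X | ∀ t ∈ Set.Icc 0 T, |F t x| ≤ ρ})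
    -- (F2)
    (C₁ C₂ : ℝ) (hC₁ : 0 < C₁) (hC₂ : 0 < C₂)
    (hF2 : ∀ t ∈ Set.Icc 0 T, ∀ x : X, |dtF t x| ≤ C₁ * F t x + C₂)
    -- (F3)
    (dtgradF : ℝ → X → X)
    (hdtgradF : ∀ x : X, ∀ t ∈ Set.Icc 0 T,
      HasDerivWithinAt (fun τ => gradF τ x) (dtgradF t x) (Set.Icc 0 T) t)
    (hF3 : ∀ M > (0 : ℝ), ∃ a : ℝ → ℝ, MeasureTheory.IntegrableOn a (Set.Icc 0 T) ∧
      ∀ t ∈ Set.Icc 0 T, ∀ x : X, ‖x‖ ≤ M → ‖dtgradF t x‖ ≤ a t)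
    -- (F4)
    (hessF : ℝ → X → X →L[ℝ] X)
    (hF4 : ∀ t ∈ Set.Icc 0 T, ContDiff ℝ 2 (F t))
    (hhessF : ∀ t ∈ Set.Icc 0 T, ∀ x : X, HasFDerivAt (gradF t) (hessF t x) x)
    (hhessFc : ContinuousOn (fun p : ℝ × X => hessF p.1 p.2) (Set.Icc 0 T ×ˢ Set.univ))
    -- (F5)
    (hF5 : ∀ t ∈ Set.Icc 0 T, ∀ x : X, gradF t x = 0 →
      ∃ r > (0 : ℝ), ∀ y : X, gradF t y = 0 → y ∈ Metric.ball x r → y = x)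
    (t : ℝ) (ht : t ∈ Set.Icc 0 T) (u₁ u₂ u₃ : X) :
    cost A B Binv gradF t u₁ u₂ ≤ cost A B Binv gradF t u₁ u₃ + cost A B Binv gradF t u₃ u₂ :=
  cost_triangle_general A B Binv hBpos hBinv₂ T gradF hessF hhessF t ht u₁ u₂ u₃
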